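/- Let G be a finite group acting faithfully by ring automorphisms on an integral domain S such that the order of G is invertible in S, and let R = S^G. Let E be a finitely generated torsion-free S-module equipped with a semilinear G-action (i.e., an additive G-action satisfying g·(s·e) = (g·s)·(g·e) for g ∈ G, s ∈ S, e ∈ E). Then the kernel of the natural S-module homomorphism σ: E^G ⊗_R S → E, e ⊗ s ↦ s·e, is exactly the torsion submodule of E^G ⊗_R S; equivalently, the induced map (E^G ⊗_R S)/torsion → E is injective. (This is the algebraic core of Lemma 4.12, which states that π^T(D(E)) injects into E.) -/

import Mathlib

/-!
Write `x = ∑ sᵢ ⊗ eᵢ` with `∑ sᵢ eᵢ = 0` in `E` and eliminate the coefficients one at a time,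
as in Gaussian elimination. If `a = s₀ ≠ 0`, pick `b` with `d = ∑_g g • (b a) ≠ 0`; summing
the `G`-translates of `b` times the relation gives a relation `∑ rᵢ eᵢ = 0` with invariant
coefficients `rᵢ = ∑_g g • (b sᵢ)` and `r₀ = d`. Since the `rᵢ` lie in `R`,
`∑ rᵢ ⊗ eᵢ = 1 ⊗ ∑ rᵢ eᵢ = 0`, so `d • x = ∑ (d sᵢ - a rᵢ) ⊗ eᵢ`, a sum of the same kind with
one coefficient fewer.
-/

open scoped TensorProduct

open Finset

theorem Submodule.mem_torsion_of_smul_mem {R M : Type*} [CommRing R] [AddCommGroup M]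
    [Module R M] {d : R} (hd : d ∈ nonZeroDivisors R) {x : M}
    (h : d • x ∈ Submodule.torsion R M) : x ∈ Submodule.torsion R M := by
  obtain ⟨m, hm⟩ := (Submodule.mem_torsion_iff _).mp h
  exact ⟨m * ⟨d, hd⟩, by rw [mul_smul]; exact hm⟩

theorem LinearMap.torsion_le_ker {R M N : Type*} [CommRing R] [AddCommGroup M] [Module R M]
    [AddCommGroup N] [Module R N] (f : M →ₗ[R] N) (hN : Submodule.torsion R N = ⊥) :
    Submodule.torsion R M ≤ LinearMap.ker f := by
  rintro x ⟨m, hm⟩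
  have : f x ∈ Submodule.torsion R N :=
    ⟨m, by rw [Submonoid.smul_def, ← map_smul, ← Submonoid.smul_def, hm, map_zero]⟩
  simpa [hN] using this

section OrbitSum

variable (G : Type*) [Group G] [Fintype G]

def orbitSum {M : Type*} [AddCommMonoid M] [DistribMulAction G M] (x : M) : M :=
  ∑ g : G, g • x

variable {G}

theorem smul_orbitSum {M : Type*} [AddCommMonoid M] [DistribMulAction G M] (g : G) (x : M) :
    g • orbitSum G x = orbitSum G x := by
  simp only [orbitSum, smul_sum, smul_smul]
  exact Fintype.sum_bijective (g * ·) (Group.mulLeft_bijective g) _ _ fun _ ↦ rfl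

variable {S : Type*} [CommRing S] [MulSemiringAction G S]

/-- Take for `b` the product of the other conjugates of `a`, so that `b * a` is the invariant
norm of `a` and `orbitSum G (b * a) = |G| * (b * a)`. -/
theorem exists_orbitSum_mul_ne_zero [IsDomain S] (hG : ((Fintype.card G : ℕ) : S) ≠ 0) {a : S}
    (ha : a ≠ 0) : ∃ b : S, orbitSum G (b * a) ≠ 0 := by
  classical
  refine ⟨∏ g ∈ univ.erase (1 : G), g • a, ?_⟩
  have hnorm : (∏ g ∈ univ.erase (1 : G), g • a) * a = ∏ g : G, g • a := by
    simpa using prod_erase_mul univ (fun g : G ↦ g • a) (mem_univ 1)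
  rw [hnorm, orbitSum]
  simp only [smul_prod_perm, sum_const, card_univ, nsmul_eq_mul]
  exact mul_ne_zero hG (prod_ne_zero_iff.mpr fun g _ ↦ (smul_ne_zero_iff_ne g).mpr ha)

end OrbitSum

theorem sum_tmul_eq_zero_of_forall_mem {S E ι : Type*} [CommRing S] [AddCommGroup E]
    [Module S E] {R : Subring S} {EG : Submodule R E} (T : Finset ι) {r : ι → S}
    (hr : ∀ i, r i ∈ R) (e : ι → EG) (hrel : ∑ i ∈ T, r i • (e i : E) = 0) :
    ∑ i ∈ T, r i ⊗ₜ[R] e i = 0 := by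
  have hrelEG : ∑ i ∈ T, (⟨r i, hr i⟩ : R) • e i = 0 := by
    ext1
    simpa [Submodule.coe_sum, Submodule.coe_smul_of_tower, Subring.smul_def] using hrel
  calc ∑ i ∈ T, r i ⊗ₜ[R] e i = ∑ i ∈ T, (1 : S) ⊗ₜ[R] ((⟨r i, hr i⟩ : R) • e i) := by
        refine sum_congr rfl fun i _ ↦ ?_
        rw [TensorProduct.tmul_smul, TensorProduct.smul_tmul', Subring.smul_def, smul_eq_mul,
          mul_one]
    _ = 0 := by rw [← TensorProduct.tmul_sum, hrelEG, TensorProduct.tmul_zero]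

section SemilinearAction

variable {G S E : Type*} [Group G] [Fintype G] [CommRing S] [MulSemiringAction G S]
  [AddCommGroup E] [Module S E] [DistribMulAction G E]

theorem sum_orbitSum_smul_eq_zero
    (hsemi : ∀ (g : G) (s : S) (e : E), g • (s • e) = (g • s) • (g • e))
    {ι : Type*} (T : Finset ι) (s : ι → S) {e : ι → E} (he : ∀ i, ∀ g : G, g • e i = e i)
    (hrel : ∑ i ∈ T, s i • e i = 0) : ∑ i ∈ T, orbitSum G (s i) • e i = 0 :=
  calc ∑ i ∈ T, orbitSum G (s i) • e i = ∑ i ∈ T, ∑ g : G, g • (s i • e i) := by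
        refine sum_congr rfl fun i _ ↦ ?_
        simp only [orbitSum, sum_smul, hsemi, he]
    _ = ∑ g : G, g • ∑ i ∈ T, s i • e i := by
        rw [sum_comm]
        simp only [smul_sum]
    _ = 0 := by simp only [hrel, smul_zero, sum_const_zero]

theorem sum_tmul_mem_torsion_of_sum_smul_eq_zero [IsDomain S] {ι : Type*} (hG : ((Fintype.card G : ℕ) : S) ≠ 0)
    {R : Subring S} (hR : ∀ s : S, (∀ g : G, g • s = s) → s ∈ R)
    (hsemi : ∀ (g : G) (s : S) (e : E), g • (s • e) = (g • s) • (g • e))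
    {EG : Submodule R E} (hEG : ∀ e ∈ EG, ∀ g : G, g • e = e)
    (e : ι → EG) (T : Finset ι) (s : ι → S) (hrel : ∑ i ∈ T, s i • (e i : E) = 0) :
    ∑ i ∈ T, s i ⊗ₜ[R] e i ∈ Submodule.torsion S (S ⊗[R] EG) := by
  classical
  induction T using Finset.induction_on generalizing s with
  | empty => simp
  | insert i₀ T hi₀ ih =>
    by_cases ha : s i₀ = 0
    · rw [sum_insert hi₀] at hrel ⊢
      rw [ha, zero_smul, zero_add] at hrel
      rw [ha, TensorProduct.zero_tmul, zero_add]
      exact ih s hrel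
    obtain ⟨b, hd⟩ := exists_orbitSum_mul_ne_zero hG ha
    set d := orbitSum G (b * s i₀)
    set r : ι → S := fun i ↦ orbitSum G (b * s i)
    set t : ι → S := fun i ↦ d * s i - s i₀ * r i
    have he : ∀ i, ∀ g : G, g • (e i : E) = e i := fun i ↦ hEG _ (e i).2
    have hrel_r : ∑ i ∈ insert i₀ T, r i • (e i : E) = 0 := by
      refine sum_orbitSum_smul_eq_zero hsemi _ _ he ?_
      simp only [mul_smul, ← smul_sum, hrel, smul_zero]
    have hr_tmul : ∑ i ∈ insert i₀ T, r i ⊗ₜ[R] e i = 0 :=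
      sum_tmul_eq_zero_of_forall_mem _ (fun i ↦ hR _ (smul_orbitSum · _)) e hrel_r
    have ht_tmul : ∑ i ∈ insert i₀ T, t i ⊗ₜ[R] e i = d • ∑ i ∈ insert i₀ T, s i ⊗ₜ[R] e i := by
      simp only [t, TensorProduct.sub_tmul, sum_sub_distrib, ← smul_eq_mul,
        ← TensorProduct.smul_tmul', ← smul_sum, hr_tmul, smul_zero, sub_zero]
    have ht_rel : ∑ i ∈ insert i₀ T, t i • (e i : E) = 0 := by
      simp only [t, sub_smul, mul_smul, sum_sub_distrib, ← smul_sum, hrel, hrel_r, smul_zero,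
        sub_zero]
    have ht₀ : t i₀ = 0 := by simp only [t, r, d]; ring
    rw [sum_insert hi₀, ht₀, zero_smul, zero_add] at ht_rel
    rw [sum_insert hi₀, ht₀, TensorProduct.zero_tmul, zero_add] at ht_tmul
    exact Submodule.mem_torsion_of_smul_mem (mem_nonZeroDivisors_of_ne_zero hd)
      (ht_tmul ▸ ih t ht_rel)

end SemilinearAction

theorem kernel_of_counit_eq_torsion_general
    (G : Type) [Group G] [Fintype G] (S : Type) [CommRing S] [IsDomain S]
    [MulSemiringAction G S]
    (hinv : IsUnit ((Fintype.card G : ℕ) : S))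
    (R : Subring S) (hR : ∀ s : S, s ∈ R ↔ ∀ g : G, g • s = s)
    (E : Type) [AddCommGroup E] [Module S E]
    [DistribMulAction G E]
    (hsemi : ∀ (g : G) (s : S) (e : E), g • (s • e) = (g • s) • (g • e))
    (htf : Submodule.torsion S E = ⊥)
    (EG : Submodule ↥R E) (hEG : ∀ e : E, e ∈ EG ↔ ∀ g : G, g • e = e)
    (σ : S ⊗[↥R] ↥EG →ₗ[S] E)
    (hσ : ∀ (s : S) (e : ↥EG), σ (s ⊗ₜ[↥R] e) = s • (e : E)) :
    LinearMap.ker σ = Submodule.torsion S (S ⊗[↥R] ↥EG) := by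
  refine le_antisymm (fun x hx ↦ ?_) (σ.torsion_le_ker htf)
  obtain ⟨T, rfl⟩ := TensorProduct.exists_finset x
  have hrel : ∑ p ∈ T, p.1 • (p.2 : E) = 0 := by
    simpa only [LinearMap.mem_ker, map_sum, hσ] using hx
  exact sum_tmul_mem_torsion_of_sum_smul_eq_zero hinv.ne_zero (fun s ↦ (hR s).mpr) hsemi
    (fun e ↦ (hEG e).mp) Prod.snd T Prod.fst hrel

/-- Let `G` be a finite group acting faithfully by ring automorphisms on
an integral domain `S` with `|G|` invertible in `S`, and let `R = S^G`. Let `E` be a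
finitely generated torsion-free `S`-module with a semilinear `G`-action. Then the kernel
of the natural map `σ : S ⊗[R] E^G → E`, `s ⊗ e ↦ s • e`, is exactly the torsion
submodule of `S ⊗[R] E^G`. -/
theorem kernel_of_counit_eq_torsion
    (G : Type) [Group G] [Fintype G] (S : Type) [CommRing S] [IsDomain S]
    [MulSemiringAction G S] [FaithfulSMul G S]
    (hinv : IsUnit ((Fintype.card G : ℕ) : S))
    (R : Subring S) (hR : ∀ s : S, s ∈ R ↔ ∀ g : G, g • s = s)
    (E : Type) [AddCommGroup E] [Module S E] [Module.Finite S E]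
    [DistribMulAction G E]
    (hsemi : ∀ (g : G) (s : S) (e : E), g • (s • e) = (g • s) • (g • e))
    (htf : Submodule.torsion S E = ⊥)
    (EG : Submodule ↥R E) (hEG : ∀ e : E, e ∈ EG ↔ ∀ g : G, g • e = e)
    (σ : S ⊗[↥R] ↥EG →ₗ[S] E)
    (hσ : ∀ (s : S) (e : ↥EG), σ (s ⊗ₜ[↥R] e) = s • (e : E)) :
    LinearMap.ker σ = Submodule.torsion S (S ⊗[↥R] ↥EG) :=
  kernel_of_counit_eq_torsion_general G S hinv R hR E hsemi htf EG hEG σ hσ
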